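/- Let ε > 0, r ≥ 0 and set c = r/√ε. Then the first-order half-space coefficient of the local part of the 2D Poisson volume potential is given exactly by (1/(2√π)) ∫₀^ε t^{-1/2} (∫_{−r}^∞ s·e^{−s²/(4t)} ds) dt = ε^{3/2} · A₁(c), where A₁(c) = (c³/6)·erfc(c/2) + ((2 − c²)/(3√π))·e^{−c²/4}. -/

import Mathlib

open MeasureTheory Real Set Filter

/-- The error function `erf x = (2/√π) ∫₀^x e^{-s²} ds`. -/
noncomputable def erf (x : ℝ) : ℝ := (2 / Real.sqrt π) * ∫ s in (0 : ℝ)..x, Real.exp (-s ^ 2)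

/-- The complementary error function `erfc x = (2/√π) ∫_x^∞ e^{-s²} ds`. -/
noncomputable def erfc (x : ℝ) : ℝ := (2 / Real.sqrt π) * ∫ s in Set.Ioi x, Real.exp (-s ^ 2)

/-- The first-order half-space coefficient of the local part of the 2D Poisson volume
potential. -/
noncomputable def A₁ (c : ℝ) : ℝ :=
  (c ^ 3 / 6) * erfc (c / 2) + ((2 - c ^ 2) / (3 * Real.sqrt π)) * Real.exp (-c ^ 2 / 4)

lemma gauss_integrable : Integrable (fun s : ℝ => Real.exp (-s ^ 2)) := by
  simpa using integrable_exp_neg_mul_sq (one_pos)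

lemma erfc_eq (x : ℝ) :
    erfc x = (2 / Real.sqrt π) *
      ((∫ s in Set.Ioi (0:ℝ), Real.exp (-s ^ 2)) - ∫ s in (0:ℝ)..x, Real.exp (-s ^ 2)) := by
  have h := gauss_integrable
  have h1 := intervalIntegral.integral_Iic_add_Ioi (μ := volume)
      (f := fun s : ℝ => Real.exp (-s ^ 2)) (b := x) h.integrableOn h.integrableOn
  have h2 := intervalIntegral.integral_Iic_add_Ioi (μ := volume)
      (f := fun s : ℝ => Real.exp (-s ^ 2)) (b := (0:ℝ)) h.integrableOn h.integrableOn
  have h3 := intervalIntegral.integral_Iic_sub_Iic (μ := volume)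
      (f := fun s : ℝ => Real.exp (-s ^ 2)) (a := (0:ℝ)) (b := x) h.integrableOn h.integrableOn
  unfold erfc
  have : (∫ s in Set.Ioi x, Real.exp (-s ^ 2))
      = (∫ s in Set.Ioi (0:ℝ), Real.exp (-s ^ 2)) - ∫ s in (0:ℝ)..x, Real.exp (-s ^ 2) := by
    rw [← h3]; linarith
  rw [this]

lemma erfc_hasDerivAt (x : ℝ) :
    HasDerivAt erfc (-(2 / Real.sqrt π) * Real.exp (-x ^ 2)) x := by
  have h := gauss_integrable
  have hΦ : HasDerivAt (fun y : ℝ => ∫ s in (0:ℝ)..y, Real.exp (-s ^ 2))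
      (Real.exp (-x ^ 2)) x :=
    intervalIntegral.integral_hasDerivAt_right h.intervalIntegrable
      h.aestronglyMeasurable.stronglyMeasurableAtFilter (Real.continuous_exp.comp
        (by continuity)).continuousAt
  have : HasDerivAt (fun y : ℝ => (2 / Real.sqrt π) *
      ((∫ s in Set.Ioi (0:ℝ), Real.exp (-s ^ 2)) - ∫ s in (0:ℝ)..y, Real.exp (-s ^ 2)))
      ((2 / Real.sqrt π) * (0 - Real.exp (-x ^ 2))) x :=
    (((hasDerivAt_const x _).sub hΦ)).const_mul _
  have heq : erfc = fun y : ℝ => (2 / Real.sqrt π) *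
      ((∫ s in Set.Ioi (0:ℝ), Real.exp (-s ^ 2)) - ∫ s in (0:ℝ)..y, Real.exp (-s ^ 2)) := by
    funext y; exact erfc_eq y
  rw [heq]
  convert this using 1; ring

lemma erfc_tendsto_zero : Tendsto erfc atTop (nhds 0) := by
  have h := gauss_integrable
  have hΦ : Tendsto (fun y : ℝ => ∫ s in (0:ℝ)..y, Real.exp (-s ^ 2)) atTop
      (nhds (∫ s in Set.Ioi (0:ℝ), Real.exp (-s ^ 2))) :=
    MeasureTheory.intervalIntegral_tendsto_integral_Ioi 0 h.integrableOn tendsto_id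
  have : Tendsto (fun y : ℝ => (2 / Real.sqrt π) *
      ((∫ s in Set.Ioi (0:ℝ), Real.exp (-s ^ 2)) - ∫ s in (0:ℝ)..y, Real.exp (-s ^ 2)))
      atTop (nhds ((2 / Real.sqrt π) * ((∫ s in Set.Ioi (0:ℝ), Real.exp (-s ^ 2))
        - ∫ s in Set.Ioi (0:ℝ), Real.exp (-s ^ 2)))) :=
    ((tendsto_const_nhds.sub hΦ)).const_mul _
  simp only [sub_self, mul_zero] at this
  exact this.congr fun y => (erfc_eq y).symm

/-- Inner integral: `∫_{-r}^∞ s e^{-s²/(4t)} ds = 2t e^{-r²/(4t)}` for `t > 0`. -/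
lemma inner_integral (r t : ℝ) (ht : 0 < t) :
    (∫ s in Set.Ioi (-r), s * Real.exp (-s ^ 2 / (4 * t)))
      = 2 * t * Real.exp (-r ^ 2 / (4 * t)) := by
  have hb : 0 < 1 / (4 * t) := by positivity
  have heq : (fun s : ℝ => s * Real.exp (-s ^ 2 / (4 * t)))
      = fun s : ℝ => s * Real.exp (-(1 / (4 * t)) * s ^ 2) := by
    funext s; congr 1; congr 1; field_simp
  have hint : IntegrableOn (fun s : ℝ => s * Real.exp (-s ^ 2 / (4 * t))) (Set.Ioi (-r)) := by
    rw [heq]; exact (integrable_mul_exp_neg_mul_sq hb).integrableOn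
  have hderiv : ∀ s : ℝ, HasDerivAt (fun s : ℝ => -2 * t * Real.exp (-s ^ 2 / (4 * t)))
      (s * Real.exp (-s ^ 2 / (4 * t))) s := by
    intro s
    have h1 : HasDerivAt (fun s : ℝ => -(1 / (4 * t)) * s ^ 2)
        (-(1 / (4 * t)) * (2 * s)) s := by
      simpa using (hasDerivAt_pow 2 s).const_mul (-(1 / (4 * t)))
    have h2 := (h1.exp).const_mul (-2 * t)
    have hfun : (fun s : ℝ => -2 * t * Real.exp (-s ^ 2 / (4 * t)))
        = fun s : ℝ => -2 * t * Real.exp (-(1 / (4 * t)) * s ^ 2) := by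
      funext s; congr 2; field_simp
    rw [hfun]
    refine h2.congr_deriv ?_
    symm
    have harg : -s ^ 2 / (4 * t) = -(1 / (4 * t)) * s ^ 2 := by field_simp
    rw [harg]; field_simp; ring
  have htend : Tendsto (fun s : ℝ => -2 * t * Real.exp (-s ^ 2 / (4 * t))) atTop (nhds 0) := by
    have h1 : Tendsto (fun s : ℝ => -s ^ 2 / (4 * t)) atTop atBot := by
      have h2 : Tendsto (fun s : ℝ => s ^ 2 * (1 / (4 * t))) atTop atTop :=
        Tendsto.atTop_mul_const hb (tendsto_pow_atTop two_ne_zero)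
      have : Tendsto (fun s : ℝ => -(s ^ 2 * (1 / (4 * t)))) atTop atBot :=
        tendsto_neg_atBot_iff.mpr h2
      refine this.congr fun s => by ring
    have h3 : Tendsto (fun s : ℝ => Real.exp (-s ^ 2 / (4 * t))) atTop (nhds 0) :=
      Real.tendsto_exp_atBot.comp h1
    have := h3.const_mul (-2 * t)
    simpa using this
  have key := MeasureTheory.integral_Ioi_of_hasDerivAt_of_tendsto
      (f := fun s : ℝ => -2 * t * Real.exp (-s ^ 2 / (4 * t)))
      (f' := fun s : ℝ => s * Real.exp (-s ^ 2 / (4 * t)))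
      (a := -r) (m := 0)
      (hderiv (-r)).continuousAt.continuousWithinAt
      (fun x _ => hderiv x) hint htend
  rw [key]
  simp only [neg_sq]
  ring

/-- The key antiderivative computation. -/
lemma key_integral (r : ℝ) (hr : 0 ≤ r) (ε : ℝ) (hε : 0 < ε) :
    (∫ t in Set.Ioc (0:ℝ) ε, Real.sqrt t * Real.exp (-r ^ 2 / (4 * t)))
      = (2 / 3) * (ε * Real.sqrt ε) * Real.exp (-r ^ 2 / (4 * ε))
        - (r ^ 2 / 3) * Real.sqrt ε * Real.exp (-r ^ 2 / (4 * ε))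
        + (Real.sqrt π * r ^ 3 / 6) * erfc (r / (2 * Real.sqrt ε)) := by
  set G : ℝ → ℝ := fun t =>
    (2 / 3) * (t * Real.sqrt t) * Real.exp (-r ^ 2 / (4 * t))
      - (r ^ 2 / 3) * Real.sqrt t * Real.exp (-r ^ 2 / (4 * t))
      + (Real.sqrt π * r ^ 3 / 6) * erfc (r / (2 * Real.sqrt t)) with hG
  set F : ℝ → ℝ := fun t => if t ≤ 0 then 0 else G t with hF
  have hπ : Real.sqrt π ≠ 0 := ne_of_gt (Real.sqrt_pos.mpr Real.pi_pos)
  -- derivative of G at positive points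
  have hGderiv : ∀ t : ℝ, 0 < t →
      HasDerivAt G (Real.sqrt t * Real.exp (-r ^ 2 / (4 * t))) t := by
    intro t ht
    have hst : Real.sqrt t ≠ 0 := ne_of_gt (Real.sqrt_pos.mpr ht)
    have hst2 : Real.sqrt t ^ 2 = t := Real.sq_sqrt ht.le
    have hsq : HasDerivAt Real.sqrt (1 / (2 * Real.sqrt t)) t := Real.hasDerivAt_sqrt (ne_of_gt ht)
    -- exp factor
    have hinner : HasDerivAt (fun t : ℝ => -r ^ 2 / (4 * t))
        (-r ^ 2 / 4 * (-(t ^ 2)⁻¹)) t := by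
      have := (hasDerivAt_inv (ne_of_gt ht)).const_mul (-r ^ 2 / 4)
      refine HasDerivAt.congr_of_eventuallyEq this ?_
      filter_upwards with x
      ring
    have hexp : HasDerivAt (fun t : ℝ => Real.exp (-r ^ 2 / (4 * t)))
        (Real.exp (-r ^ 2 / (4 * t)) * (-r ^ 2 / 4 * (-(t ^ 2)⁻¹))) t := hinner.exp
    -- t * sqrt t
    have h1 : HasDerivAt (fun t : ℝ => t * Real.sqrt t)
        (1 * Real.sqrt t + t * (1 / (2 * Real.sqrt t))) t := (hasDerivAt_id t).mul hsq
    -- erfc argument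
    have harg : HasDerivAt (fun t : ℝ => r / (2 * Real.sqrt t))
        (r / 2 * (-(1 / (2 * Real.sqrt t)) / Real.sqrt t ^ 2)) t := by
      have hi : HasDerivAt (fun t : ℝ => (Real.sqrt t)⁻¹)
          (-(1 / (2 * Real.sqrt t)) / Real.sqrt t ^ 2) t := hsq.inv hst
      have := hi.const_mul (r / 2)
      refine HasDerivAt.congr_of_eventuallyEq this ?_
      filter_upwards with x
      rw [div_eq_mul_inv, mul_inv, div_eq_mul_inv]; ring
    have herfc := (erfc_hasDerivAt (r / (2 * Real.sqrt t))).comp t harg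
    -- assemble
    have hsum := (((h1.mul hexp).const_mul ((2:ℝ)/3)).sub
        ((hsq.mul hexp).const_mul (r ^ 2 / 3))).add (herfc.const_mul (Real.sqrt π * r ^ 3 / 6))
    have hfun : G = fun x =>
        2 / 3 * (x * Real.sqrt x * Real.exp (-r ^ 2 / (4 * x)))
          - r ^ 2 / 3 * (Real.sqrt x * Real.exp (-r ^ 2 / (4 * x)))
          + Real.sqrt π * r ^ 3 / 6 * ((erfc ∘ fun t => r / (2 * Real.sqrt t)) x) := by
      funext x; simp only [hG, Function.comp]; ring
    rw [hfun]
    refine hsum.congr_deriv ?_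
    symm
    have hsq' : (r / (2 * Real.sqrt t)) ^ 2 = r ^ 2 / (4 * t) := by
      rw [div_pow, mul_pow, hst2]; norm_num
    rw [hsq', neg_div]
    generalize hq : Real.sqrt t = q
    rw [hq] at hst hst2
    rw [← hst2]
    field_simp
    ring
  -- continuity of F on Icc 0 ε
  have hFG : ∀ t : ℝ, 0 < t → F t = G t := by
    intro t ht; simp [hF, not_le.mpr ht]
  have hcont : ContinuousOn F (Set.Icc 0 ε) := by
    intro x hx
    rcases eq_or_lt_of_le hx.1 with h0 | hpos
    · -- x = 0
      subst h0
      rw [ContinuousWithinAt]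
      have hF0 : F 0 = 0 := by simp [hF]
      rw [hF0]
      have hmono : nhdsWithin (0:ℝ) (Set.Icc 0 ε) ≤ nhdsWithin (0:ℝ) (Set.Ioi 0) ⊔ pure 0 := by
        rw [← nhdsWithin_singleton, ← nhdsWithin_union]
        apply nhdsWithin_mono
        intro y hy
        rcases eq_or_lt_of_le hy.1 with h | h
        · right; simp [← h]
        · left; exact h
      refine Tendsto.mono_left ?_ hmono
      rw [tendsto_sup]
      constructor
      · -- limit from the right is 0
        have hE1 : ∀ t : ℝ, 0 < t → Real.exp (-r ^ 2 / (4 * t)) ≤ 1 := by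
          intro t ht
          rw [Real.exp_le_one_iff]
          exact div_nonpos_of_nonpos_of_nonneg (neg_nonpos.mpr (sq_nonneg r)) (by positivity)
        have hsqrt0 : Tendsto (fun t : ℝ => Real.sqrt t) (nhdsWithin 0 (Set.Ioi 0)) (nhds 0) := by
          have := (Real.continuous_sqrt).tendsto 0
          rw [Real.sqrt_zero] at this
          exact this.mono_left nhdsWithin_le_nhds
        have hterm1 : Tendsto (fun t : ℝ => (2 / 3) * (t * Real.sqrt t)
            * Real.exp (-r ^ 2 / (4 * t))) (nhdsWithin 0 (Set.Ioi 0)) (nhds 0) := by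
          have hbd : ∀ᶠ t in nhdsWithin (0:ℝ) (Set.Ioi 0),
              ‖(2 / 3) * (t * Real.sqrt t) * Real.exp (-r ^ 2 / (4 * t))‖
                ≤ (2 / 3) * (t * Real.sqrt t) := by
            filter_upwards [self_mem_nhdsWithin] with t (ht : 0 < t)
            have h1 := hE1 t ht
            have h2 : (0:ℝ) < Real.exp (-r ^ 2 / (4 * t)) := Real.exp_pos _
            have h3 : 0 ≤ Real.sqrt t := Real.sqrt_nonneg t
            rw [Real.norm_eq_abs, abs_of_nonneg (by positivity)]
            calc (2 / 3) * (t * Real.sqrt t) * Real.exp (-r ^ 2 / (4 * t))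
                ≤ (2 / 3) * (t * Real.sqrt t) * 1 := by
                  apply mul_le_mul_of_nonneg_left h1; positivity
              _ = (2 / 3) * (t * Real.sqrt t) := by ring
          have htd : Tendsto (fun t : ℝ => (2 / 3) * (t * Real.sqrt t))
              (nhdsWithin 0 (Set.Ioi 0)) (nhds 0) := by
            have ht0 : Tendsto (fun t : ℝ => t) (nhdsWithin 0 (Set.Ioi 0)) (nhds 0) :=
              tendsto_id.mono_left nhdsWithin_le_nhds
            have := (ht0.mul hsqrt0).const_mul ((2:ℝ)/3)
            simpa using this
          exact squeeze_zero_norm' hbd htd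
        have hterm2 : Tendsto (fun t : ℝ => (r ^ 2 / 3) * Real.sqrt t
            * Real.exp (-r ^ 2 / (4 * t))) (nhdsWithin 0 (Set.Ioi 0)) (nhds 0) := by
          have hbd : ∀ᶠ t in nhdsWithin (0:ℝ) (Set.Ioi 0),
              ‖(r ^ 2 / 3) * Real.sqrt t * Real.exp (-r ^ 2 / (4 * t))‖
                ≤ (r ^ 2 / 3) * Real.sqrt t := by
            filter_upwards [self_mem_nhdsWithin] with t (ht : 0 < t)
            have h1 := hE1 t ht
            have h2 : (0:ℝ) < Real.exp (-r ^ 2 / (4 * t)) := Real.exp_pos _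
            have h3 : 0 ≤ Real.sqrt t := Real.sqrt_nonneg t
            rw [Real.norm_eq_abs, abs_of_nonneg (by positivity)]
            calc (r ^ 2 / 3) * Real.sqrt t * Real.exp (-r ^ 2 / (4 * t))
                ≤ (r ^ 2 / 3) * Real.sqrt t * 1 := by
                  apply mul_le_mul_of_nonneg_left h1; positivity
              _ = (r ^ 2 / 3) * Real.sqrt t := by ring
          have htd : Tendsto (fun t : ℝ => (r ^ 2 / 3) * Real.sqrt t)
              (nhdsWithin 0 (Set.Ioi 0)) (nhds 0) := by
            have := hsqrt0.const_mul (r ^ 2 / 3)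
            simpa using this
          exact squeeze_zero_norm' hbd htd
        have hterm3 : Tendsto (fun t : ℝ => (Real.sqrt π * r ^ 3 / 6)
            * erfc (r / (2 * Real.sqrt t))) (nhdsWithin 0 (Set.Ioi 0)) (nhds 0) := by
          rcases eq_or_lt_of_le hr with hr0 | hrpos
          · simp [← hr0]
          · have hargtop : Tendsto (fun t : ℝ => r / (2 * Real.sqrt t))
                (nhdsWithin 0 (Set.Ioi 0)) atTop := by
              have hs : Tendsto (fun t : ℝ => Real.sqrt t)
                  (nhdsWithin 0 (Set.Ioi 0)) (nhdsWithin 0 (Set.Ioi 0)) := by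
                rw [tendsto_nhdsWithin_iff]
                refine ⟨hsqrt0, ?_⟩
                filter_upwards [self_mem_nhdsWithin] with t (ht : 0 < t)
                exact Real.sqrt_pos.mpr ht
              have hinv : Tendsto (fun t : ℝ => (Real.sqrt t)⁻¹)
                  (nhdsWithin 0 (Set.Ioi 0)) atTop := tendsto_inv_nhdsGT_zero.comp hs
              have := hinv.const_mul_atTop (by positivity : (0:ℝ) < r / 2)
              refine this.congr fun t => by rw [← div_eq_mul_inv, div_div]
            have := (erfc_tendsto_zero.comp hargtop).const_mul (Real.sqrt π * r ^ 3 / 6)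
            simpa using this
        have := (hterm1.sub hterm2).add hterm3
        simp only [sub_zero, add_zero] at this
        refine (this.congr' ?_)
        filter_upwards [self_mem_nhdsWithin] with t (ht : 0 < t)
        rw [hFG t ht, hG]
      · -- pure 0
        rw [tendsto_pure_left]
        intro s hs
        simpa [hF] using mem_of_mem_nhds hs
    · -- x > 0
      have : F =ᶠ[nhds x] G := by
        filter_upwards [lt_mem_nhds hpos] with y hy
        exact hFG y hy
      exact ((hGderiv x hpos).continuousAt.congr this.symm).continuousWithinAt
  have hFderiv : ∀ x ∈ Set.Ioo (0:ℝ) ε, HasDerivWithinAt F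
      (Real.sqrt x * Real.exp (-r ^ 2 / (4 * x))) (Set.Ioi x) x := by
    intro x hx
    have : F =ᶠ[nhds x] G := by
      filter_upwards [lt_mem_nhds hx.1] with y hy
      exact hFG y hy
    exact (((hGderiv x hx.1).congr_of_eventuallyEq this)).hasDerivWithinAt
  have hfint : IntervalIntegrable (fun t : ℝ => Real.sqrt t * Real.exp (-r ^ 2 / (4 * t)))
      volume 0 ε := by
    rw [intervalIntegrable_iff_integrableOn_Ioc_of_le hε.le]
    have hmeas : AEStronglyMeasurable (fun t : ℝ => Real.sqrt t * Real.exp (-r ^ 2 / (4 * t)))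
        (volume.restrict (Set.Ioc 0 ε)) := by
      apply Measurable.aestronglyMeasurable
      exact Real.continuous_sqrt.measurable.mul
        ((measurable_const.div ((measurable_const.mul measurable_id')))).exp
    refine Integrable.mono' (g := fun _ => Real.sqrt ε)
      ((integrableOn_const_iff).mpr (Or.inr measure_Ioc_lt_top)) hmeas ?_
    · filter_upwards [ae_restrict_mem measurableSet_Ioc] with t ht
      have h2 : (0:ℝ) < Real.exp (-r ^ 2 / (4 * t)) := Real.exp_pos _
      have hE1 : Real.exp (-r ^ 2 / (4 * t)) ≤ 1 := by
        rw [Real.exp_le_one_iff]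
        apply div_nonpos_of_nonpos_of_nonneg (neg_nonpos.mpr (sq_nonneg r))
        have := ht.1; positivity
      rw [Real.norm_eq_abs, abs_of_nonneg (by positivity)]
      calc Real.sqrt t * Real.exp (-r ^ 2 / (4 * t)) ≤ Real.sqrt t * 1 :=
            mul_le_mul_of_nonneg_left hE1 (Real.sqrt_nonneg t)
        _ = Real.sqrt t := mul_one _
        _ ≤ Real.sqrt ε := Real.sqrt_le_sqrt ht.2
  have hFTC := intervalIntegral.integral_eq_sub_of_hasDeriv_right_of_le hε.le hcont hFderiv hfint
  rw [intervalIntegral.integral_of_le hε.le] at hFTC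
  rw [hFTC]
  have hFε : F ε = G ε := hFG ε hε
  have hF0 : F 0 = 0 := by simp [hF]
  rw [hFε, hF0, hG]
  ring

/-- The first-order half-space contribution of the local part of the 2D Poisson volume potential
equals `ε^{3/2} · A₁(c)` with `c = r/√ε`. -/
theorem halfspace_first_order_coefficient
    (ε : ℝ) (hε : 0 < ε) (r : ℝ) (hr : 0 ≤ r) (c : ℝ) (hc : c = r / Real.sqrt ε) :
    (1 / (2 * Real.sqrt π)) *
        ∫ t in Set.Ioc (0 : ℝ) ε,
          t ^ (-(1 : ℝ) / 2) * ∫ s in Set.Ioi (-r), s * Real.exp (-s ^ 2 / (4 * t))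
      = ε ^ ((3 : ℝ) / 2) * A₁ c := by
  have hπ : Real.sqrt π ≠ 0 := ne_of_gt (Real.sqrt_pos.mpr Real.pi_pos)
  have hsε : 0 < Real.sqrt ε := Real.sqrt_pos.mpr hε
  -- rewrite the integrand on Ioc
  have hcongr : ∫ t in Set.Ioc (0 : ℝ) ε,
        t ^ (-(1 : ℝ) / 2) * ∫ s in Set.Ioi (-r), s * Real.exp (-s ^ 2 / (4 * t))
      = ∫ t in Set.Ioc (0 : ℝ) ε, 2 * (Real.sqrt t * Real.exp (-r ^ 2 / (4 * t))) := by
    apply MeasureTheory.setIntegral_congr_fun measurableSet_Ioc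
    intro t ht
    show t ^ (-(1 : ℝ) / 2) * (∫ s in Set.Ioi (-r), s * Real.exp (-s ^ 2 / (4 * t)))
        = 2 * (Real.sqrt t * Real.exp (-r ^ 2 / (4 * t)))
    have ht0 : 0 < t := ht.1
    have hst : Real.sqrt t ≠ 0 := ne_of_gt (Real.sqrt_pos.mpr ht0)
    rw [inner_integral r t ht0]
    have hrpow : t ^ (-(1 : ℝ) / 2) = (Real.sqrt t)⁻¹ := by
      rw [show (-(1:ℝ)/2) = -(1/2) by norm_num, Real.rpow_neg ht0.le, ← Real.sqrt_eq_rpow]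
    rw [hrpow]
    have hmul : Real.sqrt t * Real.sqrt t = t := Real.mul_self_sqrt ht0.le
    have hkey : (Real.sqrt t)⁻¹ * (2 * (Real.sqrt t * Real.sqrt t)
        * Real.exp (-r ^ 2 / (4 * t))) = 2 * (Real.sqrt t * Real.exp (-r ^ 2 / (4 * t))) := by
      rw [show (Real.sqrt t)⁻¹ * (2 * (Real.sqrt t * Real.sqrt t)
          * Real.exp (-r ^ 2 / (4 * t)))
        = ((Real.sqrt t)⁻¹ * Real.sqrt t) * (2 * (Real.sqrt t
          * Real.exp (-r ^ 2 / (4 * t)))) from by ring, inv_mul_cancel₀ hst, one_mul]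
    rw [hmul] at hkey
    exact hkey
  rw [hcongr, MeasureTheory.integral_const_mul, key_integral r hr ε hε]
  -- substitutions: r = c * √ε
  have hrc : r = c * Real.sqrt ε := by rw [hc]; field_simp
  have hr2 : r ^ 2 = c ^ 2 * ε := by rw [hrc, mul_pow, Real.sq_sqrt hε.le]
  have hEarg : -r ^ 2 / (4 * ε) = -c ^ 2 / 4 := by rw [hr2]; field_simp
  have hearg : r / (2 * Real.sqrt ε) = c / 2 := by
    rw [hrc]; rw [mul_comm 2 (Real.sqrt ε), ← div_div, mul_div_assoc, div_self (ne_of_gt hsε)]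
    ring
  have hr3 : r ^ 3 = c ^ 3 * (ε * Real.sqrt ε) := by
    rw [hrc]; ring_nf
    rw [show Real.sqrt ε ^ 3 = Real.sqrt ε ^ 2 * Real.sqrt ε by ring, Real.sq_sqrt hε.le]
    ring
  have hrpow32 : ε ^ ((3:ℝ)/2) = ε * Real.sqrt ε := by
    rw [show (3:ℝ)/2 = 1 + 1/2 by norm_num, Real.rpow_add hε, Real.rpow_one,
      ← Real.sqrt_eq_rpow]
  rw [hEarg, hearg, hr2, hr3, hrpow32, A₁]
  field_simp
  ring
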